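/- arXiv:2509.06410 — 6 statements merged into one kernel-verified Lean document; each statement's English description precedes it below -/
import Mathlib

section
/- For a loop P = while(B){C} and any initial sub-distribution μ₀, the set [¬B]·reach_P({μ₀}) = { [¬B]·ν | ν ∈ reach_P({μ₀}) } is a chain under the pointwise order, and the output distribution satisfies ⟦P⟧(μ₀) = sup [¬B]·reach_P({μ₀}). -/
open scoped ENNReal Classical

noncomputable section

abbrev PState (V : Type) := V → ℤ
abbrev SubDist (S : Type) := S → ℝ≥0∞

/-- Total mass of a sub-distribution. -/
def mass {S : Type} (μ : SubDist S) : ℝ≥0∞ := ∑' s, μ s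

/-- Syntax of probabilistic programs. -/
inductive Prog (V : Type) where
  | skip : Prog V
  | assign (x : V) (E : PState V → ℤ) : Prog V
  | pchoice (p : ℝ≥0∞) (hp : p ≤ 1) (C₁ C₂ : Prog V) : Prog V
  | seq (C₁ C₂ : Prog V) : Prog V
  | ite (B : PState V → Prop) (C₁ C₂ : Prog V) : Prog V
  | while (B : PState V → Prop) (C : Prog V) : Prog V

variable {V : Type} [DecidableEq V]

/-- Denotational distribution-transformer semantics; the while case is a least fixed point. -/
def den : Prog V → SubDist (PState V) → SubDist (PState V)
  | .skip, μ => μ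
  | .assign x E, μ => fun σ => ∑' σ' : {σ' : PState V // Function.update σ' x (E σ') = σ}, μ σ'
  | .pchoice p _ C₁ C₂, μ => den C₁ (fun σ => p * μ σ) + den C₂ (fun σ => (1 - p) * μ σ)
  | .seq C₁ C₂, μ => den C₂ (den C₁ μ)
  | .ite B C₁ C₂, μ => den C₁ ({σ | B σ}.indicator μ) + den C₂ ({σ | ¬ B σ}.indicator μ)
  | .while B C, μ =>
      OrderHom.lfp
        (⟨fun f η => {σ | ¬ B σ}.indicator η + f (den C ({σ | B σ}.indicator η)),
          by intro f g h η σ; exact add_le_add le_rfl (h (den C ({σ | B σ}.indicator η)) σ)⟩ :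
          (SubDist (PState V) → SubDist (PState V)) →o (SubDist (PState V) → SubDist (PState V))) μ

/-- Distributional strongest postcondition: image of the semantics. -/
def post (P : Prog V) (M : Set (SubDist (PState V))) : Set (SubDist (PState V)) := den P '' M

/-- Reachable distributions of a loop, as a least fixed point in the powerset lattice. -/
def reach (B : PState V → Prop) (C : Prog V) (M : Set (SubDist (PState V))) :
    Set (SubDist (PState V)) :=
  OrderHom.lfp
    (⟨fun X => M ∪ post (Prog.ite B C Prog.skip) X,
      by intro X Y h; exact Set.union_subset_union_right M (Set.image_mono h)⟩ :
      Set (SubDist (PState V)) →o Set (SubDist (PState V)))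


namespace WhileAux

variable {V : Type} [DecidableEq V] (B : PState V → Prop) (C : Prog V)

/-- The loop functional. -/
def Φ : (SubDist (PState V) → SubDist (PState V)) →o (SubDist (PState V) → SubDist (PState V)) :=
  ⟨fun f η => {σ | ¬ B σ}.indicator η + f (den C ({σ | B σ}.indicator η)),
    by intro f g h η σ; exact add_le_add le_rfl (h (den C ({σ | B σ}.indicator η)) σ)⟩

/-- One loop-body step restricted to the guard. -/
def T (μ : SubDist (PState V)) : SubDist (PState V) := den C ({σ | B σ}.indicator μ)

/-- Filter with the negated guard. -/
def nB (μ : SubDist (PState V)) : SubDist (PState V) := {σ | ¬ B σ}.indicator μ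

/-- One step of the `if`-unfolding of the loop. -/
def g (μ : SubDist (PState V)) : SubDist (PState V) := den (Prog.ite B C Prog.skip) μ

lemma Phi_apply (f : SubDist (PState V) → SubDist (PState V)) (η : SubDist (PState V)) :
    Φ B C f η = nB B η + f (T B C η) := rfl

lemma g_eq (μ : SubDist (PState V)) : g B C μ = T B C μ + nB B μ := by
  simp [g, T, nB, den]

lemma nB_g (μ : SubDist (PState V)) : nB B (g B C μ) = nB B (T B C μ) + nB B μ := by
  rw [g_eq]
  funext σ
  by_cases h : B σ <;>
    simp [nB, Set.indicator_apply, Set.mem_setOf_eq, h]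

lemma T_g (μ : SubDist (PState V)) : T B C (g B C μ) = T B C (T B C μ) := by
  have h : ({σ | B σ}.indicator (g B C μ) : SubDist (PState V))
      = {σ | B σ}.indicator (T B C μ) := by
    rw [g_eq]
    funext σ
    by_cases h : B σ <;>
      simp [nB, Set.indicator_apply, Set.mem_setOf_eq, h]
  simp only [T, h]

lemma bot_apply (μ : SubDist (PState V)) :
    (⊥ : SubDist (PState V) → SubDist (PState V)) μ = 0 := by
  funext σ
  simp [Pi.bot_apply]

lemma shift (k : ℕ) (μ : SubDist (PState V)) :
    (Φ B C)^[k+1] ⊥ (g B C μ) = nB B μ + (Φ B C)^[k+1] ⊥ (T B C μ) := by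
  rw [Function.iterate_succ_apply']
  simp only [Phi_apply]
  rw [nB_g, T_g]
  abel

lemma nB_iterate (n : ℕ) : ∀ μ : SubDist (PState V),
    nB B ((g B C)^[n] μ) = (Φ B C)^[n+1] ⊥ μ := by
  induction n with
  | zero =>
      intro μ
      rw [Function.iterate_zero, id_eq, zero_add, Function.iterate_one, Phi_apply,
        bot_apply, add_zero]
  | succ n ih =>
      intro μ
      rw [Function.iterate_succ_apply, ih, shift, Function.iterate_succ_apply' (Φ B C) (n+1),
        Phi_apply]

lemma iter_mono : Monotone (fun n => (Φ B C)^[n] ⊥) := by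
  apply monotone_nat_of_le_succ
  intro n
  induction n with
  | zero => exact bot_le
  | succ n ih =>
      rw [Function.iterate_succ_apply', Function.iterate_succ_apply']
      exact (Φ B C).mono ih

lemma iter_le_lfp (n : ℕ) : (Φ B C)^[n] ⊥ ≤ OrderHom.lfp (Φ B C) := by
  induction n with
  | zero => exact bot_le
  | succ n ih =>
      rw [Function.iterate_succ_apply']
      calc Φ B C ((Φ B C)^[n] ⊥) ≤ Φ B C (OrderHom.lfp (Φ B C)) := (Φ B C).mono ih
        _ = OrderHom.lfp (Φ B C) := OrderHom.map_lfp (Φ B C)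

lemma lfp_eq : OrderHom.lfp (Φ B C) = ⨆ n, (Φ B C)^[n] ⊥ := by
  apply le_antisymm
  · apply OrderHom.lfp_le
    intro η σ
    have h1 : Φ B C (⨆ n, (Φ B C)^[n] ⊥) η σ
        = nB B η σ + ⨆ n, (Φ B C)^[n] ⊥ (T B C η) σ := by
      rw [Phi_apply]
      simp [iSup_apply]
    rw [h1, ENNReal.add_iSup]
    apply iSup_le
    intro n
    have h2 : nB B η σ + (Φ B C)^[n] ⊥ (T B C η) σ = (Φ B C)^[n+1] ⊥ η σ := by
      rw [Function.iterate_succ_apply', Phi_apply]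
      rfl
    rw [h2]
    have h3 : (⨆ n, (Φ B C)^[n] ⊥) η σ = ⨆ n, (Φ B C)^[n] ⊥ η σ := by
      simp [iSup_apply]
    rw [h3]
    exact le_iSup (fun n => (Φ B C)^[n] ⊥ η σ) (n+1)
  · exact iSup_le (iter_le_lfp B C)

lemma reach_eq (μ₀ : SubDist (PState V)) :
    reach B C {μ₀} = Set.range (fun n => (g B C)^[n] μ₀) := by
  unfold reach
  apply le_antisymm
  · apply OrderHom.lfp_le
    rintro ν (rfl | ⟨ν', ⟨n, rfl⟩, rfl⟩)
    · exact ⟨0, rfl⟩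
    · exact ⟨n + 1, Function.iterate_succ_apply' (g B C) n μ₀⟩
  · rintro ν ⟨n, rfl⟩
    induction n with
    | zero =>
        rw [← OrderHom.map_lfp]
        exact Or.inl rfl
    | succ n ih =>
        rw [← OrderHom.map_lfp]
        exact Or.inr ⟨(g B C)^[n] μ₀, ih,
          (Function.iterate_succ_apply' (g B C) n μ₀).symm⟩

end WhileAux

/-- the guard-filtered reachable distributions form a chain whose (pointwise)
supremum is the output distribution of the loop. -/
theorem while_den_eq_sup_filtered_reach {V : Type} [DecidableEq V] (B : PState V → Prop)
    (C : Prog V) (μ₀ : SubDist (PState V)) (hμ₀ : mass μ₀ ≤ 1) :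
    IsChain (· ≤ ·) ((fun ν => {σ | ¬ B σ}.indicator ν) '' reach B C {μ₀}) ∧
    den (Prog.while B C) μ₀ =
      sSup ((fun ν => {σ | ¬ B σ}.indicator ν) '' reach B C {μ₀}) := by
  classical
  have hset : ((fun ν => {σ | ¬ B σ}.indicator ν) '' reach B C {μ₀})
      = Set.range (fun n => (WhileAux.Φ B C)^[n+1] ⊥ μ₀) := by
    rw [WhileAux.reach_eq]
    ext ν
    constructor
    · rintro ⟨_, ⟨n, rfl⟩, rfl⟩
      exact ⟨n, (WhileAux.nB_iterate B C n μ₀).symm⟩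
    · rintro ⟨n, rfl⟩
      exact ⟨(WhileAux.g B C)^[n] μ₀, ⟨n, rfl⟩, WhileAux.nB_iterate B C n μ₀⟩
  have hmono := WhileAux.iter_mono B C
  constructor
  · rw [hset]
    rintro x ⟨m, rfl⟩ y ⟨n, rfl⟩ _
    rcases le_total m n with h | h
    · exact Or.inl (hmono (Nat.succ_le_succ h) μ₀)
    · exact Or.inr (hmono (Nat.succ_le_succ h) μ₀)
  · have hden : den (Prog.while B C) μ₀ = OrderHom.lfp (WhileAux.Φ B C) μ₀ := rfl
    rw [hden, hset, sSup_range, WhileAux.lfp_eq]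
    apply le_antisymm
    · intro σ
      simp only [iSup_apply]
      apply iSup_le
      intro n
      exact le_trans (hmono (Nat.le_succ n) μ₀ σ)
        (le_iSup (fun n => (WhileAux.Φ B C)^[n+1] ⊥ μ₀ σ) n)
    · apply iSup_le
      intro n σ
      simp only [iSup_apply]
      exact le_iSup (fun m => (WhileAux.Φ B C)^[m] ⊥ μ₀ σ) (n+1)
end
end

section
/- Soundness of the partial-correctness while rule: if I ⊆ subDist(Σ) satisfies post_{if(B){C}}(I) ⊆ I (I is an inductive distributional invariant for while(B){C}), then for every μ₀ ∈ I, the output ⟦while(B){C}⟧(μ₀) lies in the ω-closure of the set [¬B]·I = { [¬B]·μ | μ ∈ I }. -/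
open scoped ENNReal Classical

noncomputable section

variable {V : Type} [DecidableEq V]

/-- The ω-closure of a set of sub-distributions: all pointwise suprema of ω-chains in the set. -/
def omegaClosure {S : Type} (M : Set (SubDist S)) : Set (SubDist S) :=
  {ν | ∃ μ : ℕ → SubDist S, (∀ n, μ n ≤ μ (n + 1)) ∧ (∀ n, μ n ∈ M) ∧
    ν = fun s => ⨆ n, μ n s}

/-- soundness of the partial-correctness While rule. -/
theorem whileP_sound {V : Type} [DecidableEq V] (B : PState V → Prop) (C : Prog V)
    (I : Set (SubDist (PState V))) (hsub : ∀ μ ∈ I, mass μ ≤ 1)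
    (hind : post (Prog.ite B C Prog.skip) I ⊆ I)
    (μ₀ : SubDist (PState V)) (h0 : μ₀ ∈ I) :
    den (Prog.while B C) μ₀ ∈ omegaClosure ((fun ν => {σ | ¬ B σ}.indicator ν) '' I) := by
  classical
  let F : (SubDist (PState V) → SubDist (PState V)) →o
      (SubDist (PState V) → SubDist (PState V)) :=
    ⟨fun f η => {σ | ¬ B σ}.indicator η + f (den C ({σ | B σ}.indicator η)),
      by intro f g h η σ; exact add_le_add le_rfl (h (den C ({σ | B σ}.indicator η)) σ)⟩
  have hF : ∀ (f : SubDist (PState V) → SubDist (PState V)) (η : SubDist (PState V)),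
      F f η = {σ | ¬ B σ}.indicator η + f (den C ({σ | B σ}.indicator η)) := fun _ _ => rfl
  have hden : den (Prog.while B C) μ₀ = OrderHom.lfp F μ₀ := rfl
  set step : SubDist (PState V) → SubDist (PState V) :=
    fun ν => den C ({σ | B σ}.indicator ν) with hstepdef
  have hstep : ∀ ν, step ν = den C ({σ | B σ}.indicator ν) := fun _ => rfl
  have hg : ∀ ν, den (Prog.ite B C Prog.skip) ν
      = step ν + {σ | ¬ B σ}.indicator ν := by
    intro ν; rw [hstep]; simp [den]
  have indN_add : ∀ (a b : SubDist (PState V)),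
      {σ | ¬ B σ}.indicator (a + b)
        = {σ | ¬ B σ}.indicator a + {σ | ¬ B σ}.indicator b := by
    intro a b; funext σ; by_cases hσ : B σ <;> simp [Set.indicator, hσ]
  have indB_add : ∀ (a b : SubDist (PState V)),
      {σ | B σ}.indicator (a + b)
        = {σ | B σ}.indicator a + {σ | B σ}.indicator b := by
    intro a b; funext σ; by_cases hσ : B σ <;> simp [Set.indicator, hσ]
  have indBN : ∀ a : SubDist (PState V),
      {σ | B σ}.indicator ({σ | ¬ B σ}.indicator a) = 0 := by
    intro a; funext σ; by_cases hσ : B σ <;> simp [Set.indicator, hσ]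
  have indNN : ∀ a : SubDist (PState V),
      {σ | ¬ B σ}.indicator ({σ | ¬ B σ}.indicator a) = {σ | ¬ B σ}.indicator a := by
    intro a; funext σ; by_cases hσ : B σ <;> simp [Set.indicator, hσ]
  -- iterates of F as partial sums
  have hiter : ∀ (n : ℕ) (μ : SubDist (PState V)), (⇑F)^[n+1] ⊥ μ
      = ∑ k ∈ Finset.range (n+1), {σ | ¬ B σ}.indicator (step^[k] μ) := by
    intro n
    induction n with
    | zero =>
      intro μ
      funext σ
      simp [hF]
    | succ n ih =>
      intro μ
      have e1 : (⇑F)^[n+1+1] ⊥ μ = F ((⇑F)^[n+1] ⊥) μ := by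
        rw [Function.iterate_succ_apply']
      rw [e1, hF, ← hstep, ih (step μ)]
      rw [Finset.sum_range_succ' (fun k => {σ | ¬ B σ}.indicator (step^[k] μ)) (n+1)]
      simp only [← Function.iterate_succ_apply, Function.iterate_zero_apply]
      rw [add_comm]
  -- iterates of the loop body vs partial sums
  have hgiter : ∀ (n : ℕ) (μ : SubDist (PState V)),
      {σ | B σ}.indicator ((den (Prog.ite B C Prog.skip))^[n] μ)
        = {σ | B σ}.indicator (step^[n] μ)
      ∧ {σ | ¬ B σ}.indicator ((den (Prog.ite B C Prog.skip))^[n] μ)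
        = ∑ k ∈ Finset.range (n+1), {σ | ¬ B σ}.indicator (step^[k] μ) := by
    intro n
    induction n with
    | zero => intro μ; exact ⟨rfl, by simp⟩
    | succ n ih =>
      intro μ
      have e : (den (Prog.ite B C Prog.skip))^[n+1] μ
          = step (step^[n] μ)
            + {σ | ¬ B σ}.indicator ((den (Prog.ite B C Prog.skip))^[n] μ) := by
        rw [Function.iterate_succ_apply', hg, hstep, hstep, (ih μ).1]
      constructor
      · rw [e, indB_add, indBN, add_zero, Function.iterate_succ_apply']
      · rw [e, indN_add, indNN, (ih μ).2,
          Finset.sum_range_succ (fun k => {σ | ¬ B σ}.indicator (step^[k] μ)) (n+1),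
          Function.iterate_succ_apply' step n μ, add_comm]
  have hmem : ∀ n : ℕ, (den (Prog.ite B C Prog.skip))^[n] μ₀ ∈ I := by
    intro n
    induction n with
    | zero => exact h0
    | succ n ih => rw [Function.iterate_succ_apply']; exact hind ⟨_, ih, rfl⟩
  have hchain : ∀ n : ℕ, (⇑F)^[n] ⊥ ≤ (⇑F)^[n+1] ⊥ := by
    intro n
    rw [Function.iterate_succ_apply]
    exact (F.monotone.iterate n) bot_le
  have hle_lfp : ∀ n : ℕ, (⇑F)^[n] ⊥ ≤ OrderHom.lfp F := by
    intro n
    induction n with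
    | zero => exact bot_le
    | succ n ih =>
      rw [Function.iterate_succ_apply']
      calc F ((⇑F)^[n] ⊥) ≤ F (OrderHom.lfp F) := F.monotone ih
        _ = OrderHom.lfp F := OrderHom.map_lfp F
  have hLapp : ∀ (η : SubDist (PState V)) σ,
      (⨆ n, (⇑F)^[n] ⊥) η σ = ⨆ n, (⇑F)^[n] ⊥ η σ := by
    intro η σ; rw [iSup_apply, iSup_apply]
  have hLfix : OrderHom.lfp F ≤ ⨆ n, (⇑F)^[n] ⊥ := by
    apply OrderHom.lfp_le
    intro η σ
    rw [hF, Pi.add_apply, hLapp, hLapp, ENNReal.add_iSup]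
    apply iSup_le
    intro n
    have e2 : {σ' | ¬ B σ'}.indicator η σ + (⇑F)^[n] ⊥ (den C ({σ' | B σ'}.indicator η)) σ
        = (⇑F)^[n+1] ⊥ η σ := by
      rw [Function.iterate_succ_apply', hF, Pi.add_apply]
    rw [e2]
    exact le_trans (le_rfl) (le_iSup (fun m => (⇑F)^[m] ⊥ η σ) (n+1))
  have hfix : den (Prog.while B C) μ₀ = (⨆ n, (⇑F)^[n] ⊥) μ₀ := by
    rw [hden, le_antisymm hLfix (iSup_le hle_lfp)]
  refine ⟨fun n => {σ | ¬ B σ}.indicator ((den (Prog.ite B C Prog.skip))^[n] μ₀),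
    ?_, ?_, ?_⟩
  · intro n
    show {σ | ¬ B σ}.indicator ((den (Prog.ite B C Prog.skip))^[n] μ₀)
      ≤ {σ | ¬ B σ}.indicator ((den (Prog.ite B C Prog.skip))^[n+1] μ₀)
    rw [(hgiter n μ₀).2, (hgiter (n+1) μ₀).2]
    exact Finset.sum_le_sum_of_subset (Finset.range_subset_range.2 (by omega))
  · intro n
    exact ⟨_, hmem n, rfl⟩
  · rw [hfix]
    funext σ
    rw [hLapp]
    have hshift : (⨆ n, (⇑F)^[n] ⊥ μ₀ σ) = ⨆ n, (⇑F)^[n+1] ⊥ μ₀ σ := by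
      apply le_antisymm
      · exact iSup_le fun n =>
          le_trans (hchain n μ₀ σ) (le_iSup (fun m => (⇑F)^[m+1] ⊥ μ₀ σ) n)
      · exact iSup_le fun n => le_iSup (fun m => (⇑F)^[m] ⊥ μ₀ σ) (n+1)
    rw [hshift]
    have key : ∀ n : ℕ, (⇑F)^[n+1] ⊥ μ₀ σ
        = {σ' | ¬ B σ'}.indicator ((den (Prog.ite B C Prog.skip))^[n] μ₀) σ := by
      intro n
      rw [hiter n μ₀, (hgiter n μ₀).2]
    exact iSup_congr key
end
end

section
/- Soundness of the total-correctness while rule: if I is an inductive distributional invariant for P = while(B){C}, P is almost surely terminating with respect to I (for all μ ∈ I, |⟦P⟧(μ)| = |μ|), and τ = inf_{μ∈I} |μ|, then for every μ₀ ∈ I the output ⟦P⟧(μ₀) lies in cl([¬B]·I) and has mass at least τ. -/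
open scoped ENNReal Classical

noncomputable section

variable {V : Type} [DecidableEq V]

/-- Iterated application of one loop-unrolling step (`if (B) {C} else skip`). -/
def iterW (B : PState V → Prop) (C : Prog V) : ℕ → SubDist (PState V) → SubDist (PState V)
  | 0, μ => μ
  | n+1, μ => iterW B C n (den (Prog.ite B C Prog.skip) μ)

/-- The loop functional used in the while-case of `den`. -/
def loopF (B : PState V → Prop) (C : Prog V) :
    (SubDist (PState V) → SubDist (PState V)) →o (SubDist (PState V) → SubDist (PState V)) :=
  ⟨fun f η => {σ | ¬ B σ}.indicator η + f (den C ({σ | B σ}.indicator η)),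
    by intro f g h η σ; exact add_le_add le_rfl (h (den C ({σ | B σ}.indicator η)) σ)⟩

lemma den_while_eq (B : PState V → Prop) (C : Prog V) (μ : SubDist (PState V)) :
    den (Prog.while B C) μ = OrderHom.lfp (loopF B C) μ := rfl

lemma den_ite_skip (B : PState V → Prop) (C : Prog V) (μ : SubDist (PState V)) :
    den (Prog.ite B C Prog.skip) μ
      = den C ({σ | B σ}.indicator μ) + {σ | ¬ B σ}.indicator μ := rfl

lemma iterW_add_right (B : PState V → Prop) (C : Prog V) :
    ∀ n (η δ : SubDist (PState V)), (∀ σ, B σ → δ σ = 0) →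
      iterW B C n (η + δ) = iterW B C n η + δ := by
  intro n
  induction n with
  | zero => intro η δ _; rfl
  | succ n ih =>
    intro η δ h
    show iterW B C n (den (Prog.ite B C Prog.skip) (η + δ)) = _
    have hB : {σ | B σ}.indicator (η + δ) = {σ | B σ}.indicator η := by
      funext σ; by_cases hb : B σ <;> simp [Set.indicator, hb, h σ]
    have hNB : {σ | ¬ B σ}.indicator (η + δ) = {σ | ¬ B σ}.indicator η + δ := by
      funext σ
      by_cases hb : B σ
      · simp [Set.indicator, hb, h σ hb]
      · simp [Set.indicator, hb]
    rw [den_ite_skip, hB, hNB, ← add_assoc, ih _ _ h]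
    rfl

lemma iterW_indicator (B : PState V → Prop) (C : Prog V) :
    ∀ n (μ : SubDist (PState V)),
      (⇑(loopF B C))^[n+1] ⊥ μ = {σ | ¬ B σ}.indicator (iterW B C n μ) := by
  intro n
  induction n with
  | zero =>
    intro μ
    show {σ | ¬ B σ}.indicator μ + (⊥ : SubDist (PState V) → SubDist (PState V)) _ = _
    funext σ; simp [iterW]
  | succ n ih =>
    intro μ
    rw [Function.iterate_succ_apply']
    show {σ | ¬ B σ}.indicator μ + (⇑(loopF B C))^[n+1] ⊥ (den C ({σ | B σ}.indicator μ)) = _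
    rw [ih]
    have hδ : ∀ σ, B σ → {σ' | ¬ B σ'}.indicator μ σ = 0 := by
      intro σ hb; simp [Set.indicator, hb]
    have hstep : iterW B C (n+1) μ
        = iterW B C n (den C ({σ | B σ}.indicator μ)) + {σ | ¬ B σ}.indicator μ := by
      show iterW B C n (den (Prog.ite B C Prog.skip) μ) = _
      rw [den_ite_skip, iterW_add_right B C n _ _ hδ]
    rw [hstep]
    funext σ; by_cases hb : B σ <;>
      simp [Set.indicator, hb, Pi.add_apply, add_comm]

/-- soundness of the total-correctness While rule. -/
theorem whileT_sound {V : Type} [DecidableEq V] (B : PState V → Prop) (C : Prog V)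
    (I : Set (SubDist (PState V))) (hsub : ∀ μ ∈ I, mass μ ≤ 1)
    (hind : post (Prog.ite B C Prog.skip) I ⊆ I)
    (hast : ∀ μ ∈ I, mass (den (Prog.while B C) μ) = mass μ)
    (τ : ℝ≥0∞) (hτ : τ = ⨅ μ ∈ I, mass μ)
    (μ₀ : SubDist (PState V)) (h0 : μ₀ ∈ I) :
    den (Prog.while B C) μ₀ ∈ omegaClosure ((fun ν => {σ | ¬ B σ}.indicator ν) '' I) ∧
    τ ≤ mass (den (Prog.while B C) μ₀) :=  by
  classical
  set Φ := loopF B C with hΦ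
  have hmono : ∀ n, (⇑Φ)^[n] ⊥ ≤ (⇑Φ)^[n+1] ⊥ := by
    intro n
    induction n with
    | zero => exact bot_le
    | succ n ih =>
      rw [Function.iterate_succ_apply', Function.iterate_succ_apply']
      exact Φ.mono ih
  have hiter_le : ∀ n, (⇑Φ)^[n] ⊥ ≤ OrderHom.lfp Φ := by
    intro n
    induction n with
    | zero => exact bot_le
    | succ n ih =>
      rw [Function.iterate_succ_apply']
      calc Φ ((⇑Φ)^[n] ⊥) ≤ Φ (OrderHom.lfp Φ) := Φ.mono ih
        _ = OrderHom.lfp Φ := OrderHom.map_lfp Φ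
  have hlfp : OrderHom.lfp Φ = ⨆ n, (⇑Φ)^[n] ⊥ := by
    apply le_antisymm
    · apply OrderHom.lfp_le
      intro η σ
      show {σ' | ¬ B σ'}.indicator η σ
          + (⨆ n, (⇑Φ)^[n] ⊥) (den C ({σ' | B σ'}.indicator η)) σ
        ≤ (⨆ n, (⇑Φ)^[n] ⊥) η σ
      rw [iSup_apply, iSup_apply, iSup_apply, iSup_apply, ENNReal.add_iSup]
      apply iSup_le
      intro n
      have heq : {σ' | ¬ B σ'}.indicator η σ
          + (⇑Φ)^[n] ⊥ (den C ({σ' | B σ'}.indicator η)) σ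
          = (⇑Φ)^[n+1] ⊥ η σ := by
        rw [Function.iterate_succ_apply']; rfl
      rw [heq]
      exact le_iSup (fun m => (⇑Φ)^[m] ⊥ η σ) (n+1)
    · exact iSup_le hiter_le
  have hI : ∀ n, ∀ μ ∈ I, iterW B C n μ ∈ I := by
    intro n
    induction n with
    | zero => intro μ hμ; exact hμ
    | succ n ih =>
      intro μ hμ
      exact ih _ (hind ⟨μ, hμ, rfl⟩)
  constructor
  · refine ⟨fun n => {σ | ¬ B σ}.indicator (iterW B C n μ₀), ?_, ?_, ?_⟩
    · intro n
      simp only [← iterW_indicator B C]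
      intro σ
      exact hmono (n+1) μ₀ σ
    · intro n
      exact ⟨iterW B C n μ₀, hI n μ₀ h0, rfl⟩
    · rw [den_while_eq, ← hΦ, hlfp]
      funext σ
      rw [iSup_apply, iSup_apply]
      simp only [← iterW_indicator B C]
      apply le_antisymm
      · exact iSup_le fun n =>
          le_trans (hmono n μ₀ σ) (le_iSup (fun m => (⇑Φ)^[m+1] ⊥ μ₀ σ) n)
      · exact iSup_le fun n => le_iSup (fun m => (⇑Φ)^[m] ⊥ μ₀ σ) (n+1)
  · rw [hast μ₀ h0, hτ]
    exact iInf₂_le μ₀ h0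
end
end

section
/- Let E : Σ → ℤ be injective in variable x, meaning for every state σ the map c ↦ E(σ[x/c]) is injective on ℤ, and let E⁻¹_x : Σ ⇀ ℤ be its partial inverse, defined by E⁻¹_x(σ) = (E_{σ,x})⁻¹(σ(x)) when σ(x) is in the range of E_{σ,x}. Then for every sub-distribution μ, the denotational semantics of the assignment x := E satisfies ⟦x := E⟧(μ) = μ[x / E⁻¹_x], where μ[x/F](σ) = μ(σ[x/F(σ)]) if F(σ) is defined and 0 otherwise. -/
open scoped ENNReal Classical

noncomputable section

variable {V : Type} [DecidableEq V]

/-- Substitution of a partial expression for a variable in a function on states. -/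
def subst {V : Type} [DecidableEq V] (f : PState V → ℝ≥0∞) (x : V)
    (E : PState V → Option ℤ) : PState V → ℝ≥0∞ :=
  fun σ => match E σ with
  | some c => f (Function.update σ x c)
  | none => 0

/-- the semantics of an assignment that is injective in the assigned variable
is given by substitution with the partial inverse. -/
theorem injective_assignment {V : Type} [DecidableEq V] (x : V) (E : PState V → ℤ)
    (hinj : ∀ σ : PState V, Function.Injective (fun c : ℤ => E (Function.update σ x c)))
    (Einv : PState V → Option ℤ)
    (hEinv : ∀ (σ : PState V) (c : ℤ), Einv σ = some c ↔ E (Function.update σ x c) = σ x)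
    (μ : SubDist (PState V)) (hμ : mass μ ≤ 1) :
    den (Prog.assign x E) μ = subst μ x Einv := by
  funext σ
  show (∑' σ' : {σ' : PState V // Function.update σ' x (E σ') = σ}, μ σ') = subst μ x Einv σ
  have key : ∀ σ' : PState V, Function.update σ' x (E σ') = σ ↔
      Einv σ = some (σ' x) ∧ σ' = Function.update σ x (σ' x) := by
    intro σ'
    constructor
    · intro h
      have hx : E σ' = σ x := by rw [← h]; simp
      have hσ' : σ' = Function.update σ x (σ' x) := by
        funext y; by_cases hy : y = x
        · subst hy; simp
        · rw [Function.update_of_ne hy, ← h, Function.update_of_ne hy]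
      refine ⟨(hEinv σ (σ' x)).mpr ?_, hσ'⟩
      rw [← hσ']; exact hx
    · rintro ⟨h1, h2⟩
      have hE := (hEinv σ (σ' x)).mp h1
      rw [← h2] at hE
      funext y; by_cases hy : y = x
      · subst hy; simp [hE]
      · rw [Function.update_of_ne hy, h2, Function.update_of_ne hy]
  unfold subst
  cases h : Einv σ with
  | none =>
    simp only
    have : ∀ σ' : {σ' : PState V // Function.update σ' x (E σ') = σ}, μ σ' = 0 := by
      rintro ⟨σ', hσ'⟩
      exact absurd ((key σ').mp hσ').1 (by simp [h])
    simp [tsum_congr this]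
  | some c =>
    simp only
    have hset : {σ' : PState V | Function.update σ' x (E σ') = σ} =
        {Function.update σ x c} := by
      ext σ'
      simp only [Set.mem_setOf_eq, Set.mem_singleton_iff, key σ', h]
      constructor
      · rintro ⟨h1, h2⟩
        have : σ' x = c := by injection h1.symm
        rw [h2, this]
      · intro h2
        have hx : σ' x = c := by rw [h2]; simp
        exact ⟨by rw [hx], by rw [hx, ← h2]⟩
    calc (∑' σ' : {σ' : PState V // Function.update σ' x (E σ') = σ}, μ σ')
        = ∑' σ' : ({Function.update σ x c} : Set (PState V)), μ σ' := by rw [← hset]; rfl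
      _ = μ (Function.update σ x c) := tsum_singleton _ _
end
end

section
/- Von Neumann trick, limiting fairness: with the Markov chain 𝔐 of the previous context and initial distribution δ_{(0,0)}, the sequence 𝔐^n(δ_{(0,0)}) converges pointwise to the distribution assigning probability 1/2 to each of (0,1) and (1,0) and probability 0 to (0,0) and (1,1), for every bias p ∈ (0,1). -/
open scoped ENNReal Classical

noncomputable section

/-- Dirac (point) distribution. -/
def dirac {S : Type} (σ : S) : SubDist S := Set.indicator {σ} (fun _ => 1)

/-- Action of a Markov chain (given by its transition function) on sub-distributions. -/
def mcStep {S : Type} (P : S → SubDist S) (μ : SubDist S) : SubDist S :=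
  fun s' => ∑' s, μ s * P s s'

/-- Markov chain of Von Neumann's trick: states with `x = y` flip two `p`-biased coins,
states with `x ≠ y` are absorbing. -/
def vnP (p : ℝ≥0∞) : Bool × Bool → SubDist (Bool × Bool) := fun s =>
  if s.1 = s.2 then
    fun t =>
      if t = (false, false) then p * p
      else if t = (false, true) then p * (1 - p)
      else if t = (true, false) then (1 - p) * p
      else (1 - p) * (1 - p)
  else dirac s

/-- Closed form for the iterates of the Von Neumann chain started at `(false, false)`. -/
def vnG (p : ℝ≥0∞) (n : ℕ) : SubDist (Bool × Bool) := fun s =>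
  if s = (false, false) then (if n = 0 then 1 else p * p * (p * p + (1-p)*(1-p)) ^ (n-1))
  else if s = (true, true) then (if n = 0 then 0 else (1-p) * (1-p) * (p * p + (1-p)*(1-p)) ^ (n-1))
  else if s = (false, true) then p * (1-p) * ∑ k ∈ Finset.range n, (p * p + (1-p)*(1-p)) ^ k
  else (1-p) * p * ∑ k ∈ Finset.range n, (p * p + (1-p)*(1-p)) ^ k

lemma vnG_eq (p : ℝ≥0∞) (n : ℕ) :
    (mcStep (vnP p))^[n] (dirac (false, false)) = vnG p n := by
  induction n with
  | zero =>
    funext s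
    simp only [Function.iterate_zero, id_eq, vnG, dirac, Set.indicator]
    rcases s with ⟨a, b⟩
    rcases a <;> rcases b <;> simp
  | succ n ih =>
    rw [Function.iterate_succ_apply', ih]
    funext s
    have hsum : ∀ F : Bool × Bool → ℝ≥0∞,
        ∑' t, F t = F (false, false) + F (false, true) + F (true, false) + F (true, true) := by
      intro F
      rw [tsum_fintype, Fintype.sum_prod_type]
      simp [Fintype.sum_bool]
      ring
    simp only [mcStep, hsum]
    rcases s with ⟨a, b⟩
    rcases a <;> rcases b <;>
      · simp only [vnG, vnP, dirac, Set.indicator]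
        rcases n with _ | m <;>
          · norm_num [Finset.sum_range_succ]
            try ring

/-- the distributions reached from the Dirac distribution on (0,0) converge
pointwise to the fair distribution on {(0,1),(1,0)}. -/
theorem vonNeumann_limit (p : ℝ≥0∞) (hp : 0 < p) (hp1 : p < 1) (s : Bool × Bool) :
    Filter.Tendsto (fun n => (mcStep (vnP p))^[n] (dirac (false, false)) s)
      Filter.atTop
      (nhds (if s = (false, true) ∨ s = (true, false) then 1 / 2 else 0)) := by
  simp only [vnG_eq, vnG]
  have hple : p ≤ 1 := hp1.le
  have hpt : p ≠ ⊤ := (hp1.trans_le le_top).ne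
  have h1p0 : 1 - p ≠ 0 := by
    simp only [ne_eq, tsub_eq_zero_iff_le, not_le]; exact hp1
  have h1pt : 1 - p ≠ ⊤ :=
    ((tsub_le_self.trans_lt (by norm_num : (1:ℝ≥0∞) < ⊤))).ne
  have hpp : p + (1 - p) = 1 := add_tsub_cancel_of_le hple
  generalize hr : 1 - p = r at *
  set q : ℝ≥0∞ := p * p + r * r with hq
  have hr0 : p * r + r * p ≠ 0 := by
    simp [mul_eq_zero, hp.ne', h1p0]
  have hkey : q + (p * r + r * p) = 1 := by
    have h : (p + r) * (p + r) = 1 := by rw [hpp]; ring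
    rw [hq, ← h]; ring
  have hqt : q ≠ ⊤ := by
    refine ne_top_of_le_ne_top (by norm_num : (1:ℝ≥0∞) ≠ ⊤) ?_
    rw [← hkey]; exact le_self_add
  have hq1 : q < 1 := by
    calc q < q + (p * r + r * p) := ENNReal.lt_add_right hqt hr0
    _ = 1 := hkey
  have hsub : 1 - q = p * r + r * p :=
    ENNReal.sub_eq_of_eq_add hqt (by rw [← hkey, add_comm])
  have hgeo : Filter.Tendsto (fun n => ∑ k ∈ Finset.range n, q ^ k) Filter.atTop
      (nhds ((1 - q)⁻¹)) := by
    simpa [ENNReal.tsum_geometric] using ENNReal.tendsto_nat_tsum (fun k => q ^ k)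
  have hpow : Filter.Tendsto (fun n : ℕ => q ^ (n - 1)) Filter.atTop (nhds 0) :=
    (ENNReal.tendsto_pow_atTop_nhds_zero_of_lt_one hq1).comp (Filter.tendsto_sub_atTop_nat 1)
  have ha0 : p * r ≠ 0 := by simp [hp.ne', h1p0]
  have hat : p * r ≠ ⊤ := ENNReal.mul_ne_top hpt h1pt
  have hhalf : p * r * (1 - q)⁻¹ = 1 / 2 := by
    rw [hsub, mul_comm r p, ← two_mul,
      ENNReal.mul_inv (Or.inr hat) (Or.inl (by norm_num)),
      mul_comm (2:ℝ≥0∞)⁻¹, ← mul_assoc, ENNReal.mul_inv_cancel ha0 hat, one_mul, one_div]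
  have hdiag : ∀ c d : ℝ≥0∞, c ≠ ⊤ →
      Filter.Tendsto (fun n : ℕ => if n = 0 then d else c * q ^ (n - 1))
        Filter.atTop (nhds 0) := by
    intro c d hc
    have h := ENNReal.Tendsto.const_mul (a := c) hpow (Or.inr hc)
    rw [mul_zero] at h
    refine h.congr' ?_
    filter_upwards [Filter.eventually_atTop.2 ⟨1, fun n hn => hn⟩] with n hn
    simp [Nat.one_le_iff_ne_zero.mp hn]
  have hoff : Filter.Tendsto (fun n : ℕ => p * r * ∑ k ∈ Finset.range n, q ^ k)
      Filter.atTop (nhds (1 / 2)) := by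
    have h := ENNReal.Tendsto.const_mul (a := p * r) hgeo (Or.inr hat)
    rwa [hhalf] at h
  rcases s with ⟨a, b⟩
  rcases a <;> rcases b <;>
    simp only [Prod.mk.injEq, and_self, and_false, false_and, and_true, true_and,
      or_self, or_false, false_or, if_true, if_false, Bool.false_eq_true, Bool.true_eq_false,
      reduceIte, ← hq]
  · exact hdiag (p * p) 1 (ENNReal.mul_ne_top hpt hpt)
  · exact hoff
  · simpa [mul_comm] using hoff
  · exact hdiag (r * r) 0 (ENNReal.mul_ne_top h1pt h1pt)
end
end

section
/- Fast Dice Roller single loop iteration preserves the uniform invariant: let n ≥ 1 and suppose μ is a distribution on pairs (v, c) ∈ ℤ² such that (i) μ is supported on { (v,c) | 0 < v < 2n−1, 0 ≤ c < min(v,n) }, and (ii) for every fixed v, all states (v,c) with 0 ≤ c < min(v,n) have equal probability. Define the successor distribution μ' by: for states with v ≥ n, keep μ; for states with v < n, double v, replace c by 2c or 2c+1 each with probability 1/2, and if the new c satisfies c ≥ n subtract n from both v and c. Then μ' again satisfies (i) and (ii). -/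
open scoped ENNReal Classical

noncomputable section

/-- If the counter is at least `n`, subtract `n` from both components. -/
def fdrAdj (n : ℤ) (s : ℤ × ℤ) : ℤ × ℤ := if n ≤ s.2 then (s.1 - n, s.2 - n) else s

/-- One guarded iteration of the Fast Dice Roller loop as a Markov kernel on pairs (v, c):
if v < n, double v, set c to 2c or 2c+1 with probability 1/2 each, and subtract n from both
if the new c is ≥ n; otherwise stay put. -/
def fdrKernel (n : ℤ) : ℤ × ℤ → SubDist (ℤ × ℤ) := fun s =>
  if s.1 < n then
    fun t => (if t = fdrAdj n (2 * s.1, 2 * s.2) then (2 : ℝ≥0∞)⁻¹ else 0)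
      + (if t = fdrAdj n (2 * s.1, 2 * s.2 + 1) then (2 : ℝ≥0∞)⁻¹ else 0)
  else dirac s

-- auxiliary lemmas

lemma tsum_pair (f : ℤ × ℤ → ℝ≥0∞) (a b : ℤ × ℤ) (hab : a ≠ b)
    (h : ∀ s, s ≠ a → s ≠ b → f s = 0) : ∑' s, f s = f a + f b := by
  rw [tsum_eq_sum (s := ({a, b} : Finset (ℤ × ℤ)))
    (fun s hs => h s (fun e => hs (by simp [e])) (fun e => hs (by simp [e])))]
  rw [Finset.sum_insert (by simpa using hab), Finset.sum_singleton]

lemma eq_adj_iff (n v c a b : ℤ) :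
    (v, c) = fdrAdj n (a, b) ↔ (n ≤ b ∧ v = a - n ∧ c = b - n) ∨ (¬n ≤ b ∧ v = a ∧ c = b) := by
  unfold fdrAdj
  split_ifs with h <;> simp [Prod.ext_iff, h]

lemma dirac_ne (σ t : ℤ × ℤ) (h : dirac σ t ≠ 0) : t = σ := by
  by_contra hne
  exact h (by simp [dirac, Set.indicator, hne])

lemma fdr_eval0 (n v c : ℤ) (h : n ≤ v) : fdrKernel n (v, c) (v, c) = 1 := by
  simp [fdrKernel, show ¬ (v < n) by omega, dirac]

lemma kernel_lt (n w d : ℤ) (hw : w < n) (t : ℤ × ℤ) :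
    fdrKernel n (w, d) t =
      (if t = fdrAdj n (2 * w, 2 * d) then (2 : ℝ≥0∞)⁻¹ else 0)
        + (if t = fdrAdj n (2 * w, 2 * d + 1) then (2 : ℝ≥0∞)⁻¹ else 0) := by
  simp [fdrKernel, hw]

lemma fdr_eval1 (n v c : ℤ) (hn : 1 ≤ n) (h2 : 2 ∣ v) (hv : 0 < v) (hvn : v < 2 * n)
    (hc0 : 0 ≤ c) (hcn : c < n) :
    fdrKernel n (v / 2, c / 2) (v, c) = 2⁻¹ := by
  rw [kernel_lt n (v/2) (c/2) (by omega)]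
  rcases (by omega : 2 * (c / 2) = c ∨ 2 * (c / 2) = c - 1) with h | h <;>
    rw [show (2 * (v/2) : ℤ) = v by omega, h]
  · rw [if_pos (by rw [eq_adj_iff]; omega), if_neg (by rw [eq_adj_iff]; omega), add_zero]
  · rw [if_neg (by rw [eq_adj_iff]; omega), if_pos (by rw [eq_adj_iff]; omega), zero_add]

lemma fdr_eval2 (n v c : ℤ) (hn : 1 ≤ n) (h2 : 2 ∣ (v + n)) (hv : 0 < v) (hvn : v < n)
    (hc0 : 0 ≤ c) (hcn : c < n) :
    fdrKernel n ((v + n) / 2, (c + n) / 2) (v, c) = 2⁻¹ := by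
  rw [kernel_lt n ((v+n)/2) ((c+n)/2) (by omega)]
  rcases (by omega : 2 * ((c + n) / 2) = c + n ∨ 2 * ((c + n) / 2) = c + n - 1) with h | h <;>
    rw [show (2 * ((v+n)/2) : ℤ) = v + n by omega, h]
  · rw [if_pos (by rw [eq_adj_iff]; omega), if_neg (by rw [eq_adj_iff]; omega), add_zero]
  · rw [if_neg (by rw [eq_adj_iff]; omega), if_pos (by rw [eq_adj_iff]; omega), zero_add]

lemma fdr_classify (n : ℤ) (μ : SubDist (ℤ × ℤ))
    (hsupp : ∀ v c : ℤ, μ (v, c) ≠ 0 → 0 < v ∧ v < 2 * n - 1 ∧ 0 ≤ c ∧ c < min v n)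
    (v c : ℤ) (s : ℤ × ℤ) (hF : μ s * fdrKernel n s (v, c) ≠ 0) :
    (s = (v, c) ∧ n ≤ v) ∨
    (s = (v / 2, c / 2) ∧ 2 ∣ v ∧ 0 ≤ c ∧ v < 2 * n) ∨
    (s = ((v + n) / 2, (c + n) / 2) ∧ 2 ∣ (v + n) ∧ 0 ≤ c + n ∧ v < n) := by
  obtain ⟨w, d⟩ := s
  have hμs : μ (w, d) ≠ 0 := fun h => hF (by simp [h])
  have hP : fdrKernel n (w, d) (v, c) ≠ 0 := fun h => hF (by simp [h])
  obtain ⟨hw0, hw1, hd0, hd1⟩ := hsupp w d hμs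
  have hdw : d < w := lt_of_lt_of_le hd1 (min_le_left _ _)
  have hdn : d < n := lt_of_lt_of_le hd1 (min_le_right _ _)
  by_cases hwn : w < n
  · rw [kernel_lt n w d hwn] at hP
    have hcases : (v, c) = fdrAdj n (2 * w, 2 * d) ∨ (v, c) = fdrAdj n (2 * w, 2 * d + 1) := by
      by_contra hcon
      push_neg at hcon
      simp [hcon.1, hcon.2] at hP
    rw [eq_adj_iff, eq_adj_iff] at hcases
    simp only [Prod.ext_iff]
    omega
  · have h := dirac_ne (w, d) (v, c) (fun h => hP (by simp [fdrKernel, hwn, h]))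
    rw [Prod.ext_iff] at h
    left
    exact ⟨by simp [Prod.ext_iff]; omega, by omega⟩

lemma fdr_formula (n : ℤ) (hn : 1 ≤ n) (μ : SubDist (ℤ × ℤ))
    (hsupp : ∀ v c : ℤ, μ (v, c) ≠ 0 → 0 < v ∧ v < 2 * n - 1 ∧ 0 ≤ c ∧ c < min v n)
    (v c : ℤ) (hc0 : 0 ≤ c) (hcv : c < v) (hcn : c < n) :
    mcStep (fdrKernel n) μ (v, c) =
      (if n ≤ v then μ (v, c) else 0)
      + (if 2 ∣ v ∧ v < 2 * n then 2⁻¹ * μ (v / 2, c / 2) else 0)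
      + (if 2 ∣ (v + n) ∧ v < n then 2⁻¹ * μ ((v + n) / 2, (c + n) / 2) else 0) := by
  have hv : 0 < v := by omega
  rw [show mcStep (fdrKernel n) μ (v, c) = ∑' s, μ s * fdrKernel n s (v, c) from rfl]
  by_cases hvn : n ≤ v
  · rw [tsum_pair _ (v, c) (v / 2, c / 2)
      (by simp only [ne_eq, Prod.ext_iff]; omega)
      (by
        intro s hs1 hs2
        by_contra hne
        rcases fdr_classify n μ hsupp v c s hne with ⟨h, _⟩ | ⟨h, _⟩ | ⟨_, _, _, h⟩
        · exact hs1 h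
        · exact hs2 h
        · omega)]
    rw [if_pos hvn, if_neg (by omega : ¬(2 ∣ (v + n) ∧ v < n)), add_zero]
    congr 1
    · rw [fdr_eval0 n v c hvn, mul_one]
    · by_cases hcond : 2 ∣ v ∧ v < 2 * n
      · rw [if_pos hcond, fdr_eval1 n v c hn hcond.1 hv hcond.2 hc0 hcn, mul_comm]
      · rw [if_neg hcond]
        by_contra hne
        rcases fdr_classify n μ hsupp v c _ hne with ⟨h, _⟩ | ⟨_, h1, _, h2⟩ | ⟨_, _, _, h⟩
        · rw [Prod.ext_iff] at h; simp at h; omega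
        · exact hcond ⟨h1, h2⟩
        · omega
  · rw [tsum_pair _ (v / 2, c / 2) ((v + n) / 2, (c + n) / 2)
      (by simp only [ne_eq, Prod.ext_iff]; omega)
      (by
        intro s hs1 hs2
        by_contra hne
        rcases fdr_classify n μ hsupp v c s hne with ⟨_, h⟩ | ⟨h, _⟩ | ⟨h, _⟩
        · omega
        · exact hs1 h
        · exact hs2 h)]
    rw [if_neg hvn]
    rw [zero_add]
    congr 1
    · by_cases hcond : 2 ∣ v ∧ v < 2 * n
      · rw [if_pos hcond, fdr_eval1 n v c hn hcond.1 hv hcond.2 hc0 hcn, mul_comm]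
      · rw [if_neg hcond]
        by_contra hne
        rcases fdr_classify n μ hsupp v c _ hne with ⟨h, _⟩ | ⟨_, h1, _, h2⟩ | ⟨h, h1, _, _⟩
        · rw [Prod.ext_iff] at h; simp at h; omega
        · exact hcond ⟨h1, h2⟩
        · rw [Prod.ext_iff] at h; simp at h; omega
    · by_cases hcond : 2 ∣ (v + n) ∧ v < n
      · rw [if_pos hcond, fdr_eval2 n v c hn hcond.1 hv hcond.2 hc0 hcn, mul_comm]
      · rw [if_neg hcond]
        by_contra hne
        rcases fdr_classify n μ hsupp v c _ hne with ⟨h, _⟩ | ⟨h, h1, _, _⟩ | ⟨_, h1, _, h2⟩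
        · rw [Prod.ext_iff] at h; simp at h; omega
        · rw [Prod.ext_iff] at h; simp at h; omega
        · exact hcond ⟨h1, h2⟩


/-- a single guarded iteration of the Fast Dice Roller preserves the support
condition (i) and the per-column uniformity condition (ii) of the invariant. -/
theorem fdr_invariant_step (n : ℤ) (hn : 1 ≤ n) (μ : SubDist (ℤ × ℤ)) (hμ : mass μ = 1)
    (hsupp : ∀ v c : ℤ, μ (v, c) ≠ 0 → 0 < v ∧ v < 2 * n - 1 ∧ 0 ≤ c ∧ c < min v n)
    (hunif : ∀ v c c' : ℤ, 0 ≤ c → c < min v n → 0 ≤ c' → c' < min v n →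
      μ (v, c) = μ (v, c')) :
    (∀ v c : ℤ, mcStep (fdrKernel n) μ (v, c) ≠ 0 →
        0 < v ∧ v < 2 * n - 1 ∧ 0 ≤ c ∧ c < min v n) ∧
    (∀ v c c' : ℤ, 0 ≤ c → c < min v n → 0 ≤ c' → c' < min v n →
        mcStep (fdrKernel n) μ (v, c) = mcStep (fdrKernel n) μ (v, c')) := by
  constructor
  · intro v c hne
    obtain ⟨s, hs⟩ : ∃ s, μ s * fdrKernel n s (v, c) ≠ 0 := by
      by_contra h
      push_neg at h
      exact hne (by simp [mcStep, h])
    obtain ⟨w, d⟩ := s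
    have hμs : μ (w, d) ≠ 0 := fun h => hs (by simp [h])
    have hP : fdrKernel n (w, d) (v, c) ≠ 0 := fun h => hs (by simp [h])
    obtain ⟨hw0, hw1, hd0, hd1⟩ := hsupp w d hμs
    have hdw : d < w := lt_of_lt_of_le hd1 (min_le_left _ _)
    have hdn : d < n := lt_of_lt_of_le hd1 (min_le_right _ _)
    simp only [lt_min_iff]
    by_cases hwn : w < n
    · rw [kernel_lt n w d hwn] at hP
      have hcases : (v, c) = fdrAdj n (2 * w, 2 * d) ∨ (v, c) = fdrAdj n (2 * w, 2 * d + 1) := by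
        by_contra hcon
        push_neg at hcon
        simp [hcon.1, hcon.2] at hP
      rw [eq_adj_iff, eq_adj_iff] at hcases
      omega
    · have h := dirac_ne (w, d) (v, c) (fun h => hP (by simp [fdrKernel, hwn, h]))
      rw [Prod.ext_iff] at h
      simp only at h
      omega
  · intro v c c' hc0 hc hc0' hc'
    have h1 := lt_min_iff.mp hc
    have h2 := lt_min_iff.mp hc'
    rw [fdr_formula n hn μ hsupp v c hc0 h1.1 h1.2,
        fdr_formula n hn μ hsupp v c' hc0' h2.1 h2.2]
    have e0 : (if n ≤ v then μ (v, c) else 0) = (if n ≤ v then μ (v, c') else 0) := by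
      split_ifs with h
      · exact hunif v c c' hc0 hc hc0' hc'
      · rfl
    have e1 : (if 2 ∣ v ∧ v < 2 * n then 2⁻¹ * μ (v / 2, c / 2) else 0)
        = (if 2 ∣ v ∧ v < 2 * n then 2⁻¹ * μ (v / 2, c' / 2) else 0) := by
      split_ifs with h
      · rw [hunif (v / 2) (c / 2) (c' / 2) (by omega)
          (lt_min_iff.mpr ⟨by omega, by omega⟩) (by omega)
          (lt_min_iff.mpr ⟨by omega, by omega⟩)]
      · rfl
    have e2 : (if 2 ∣ (v + n) ∧ v < n then 2⁻¹ * μ ((v + n) / 2, (c + n) / 2) else 0)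
        = (if 2 ∣ (v + n) ∧ v < n then 2⁻¹ * μ ((v + n) / 2, (c' + n) / 2) else 0) := by
      split_ifs with h
      · rw [hunif ((v + n) / 2) ((c + n) / 2) ((c' + n) / 2) (by omega)
          (lt_min_iff.mpr ⟨by omega, by omega⟩) (by omega)
          (lt_min_iff.mpr ⟨by omega, by omega⟩)]
      · rfl
    rw [e0, e1, e2]
end
end
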